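/- Let p be an odd prime and F(t) = Σ_{i≥1} a_i t^i ∈ Q_p[[t]] with v_p(a_i) ≥ −v_p(i) for all i, and suppose v_p(a_1) = c < ∞ while v_p(a_i) + i > c + 1 for all i ≥ 2 (valuations of a_i t^i at t ∈ pZ_p dominated by the linear term). Then F has exactly one zero t in pZ_p, namely t = 0. -/

import Mathlib

/-- Newton polygon argument of Chabauty–Coleman: if `F(t) = Σ_{i≥1} a_i t^i` over `Q_p`
satisfies `v_p(a_i) ≥ -v_p(i)`, with `a_1 ≠ 0` of valuation `c`, and the valuation of
every higher term dominates (`v_p(a_i) + i > c + 1` for `i ≥ 2`), then the only zero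
of `F` in `p Z_p` is `t = 0`. -/
theorem stmt_18 (p : ℕ) [Fact p.Prime] (hp : Odd p) (a : ℕ → ℚ_[p])
    (ha0 : a 0 = 0) (ha1 : a 1 ≠ 0) (c : ℤ) (hc : (a 1).valuation = c)
    (hval : ∀ i : ℕ, 1 ≤ i → a i ≠ 0 → -(padicValNat p i : ℤ) ≤ (a i).valuation)
    (hdom : ∀ i : ℕ, 2 ≤ i → a i ≠ 0 → c + 1 < (a i).valuation + i) :
    ∀ t : ℚ_[p], ‖t‖ ≤ (p : ℝ)⁻¹ →
      ((∑' i : ℕ, a i * t ^ i) = 0 ↔ t = 0) := by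
  have hp1 : (1 : ℝ) < p := by
    exact_mod_cast (Fact.out : p.Prime).one_lt
  have hp0 : (0 : ℝ) < p := lt_trans one_pos hp1
  intro t ht
  constructor
  · -- forward direction
    intro hsum
    by_contra htne
    -- t ≠ 0
    -- valuation of t
    set vt : ℤ := t.valuation with hvt
    have hnt : ‖t‖ = (p : ℝ) ^ (-vt) := Padic.norm_eq_zpow_neg_valuation htne
    have hvt1 : 1 ≤ vt := by
      rw [hnt] at ht
      have : (p : ℝ) ^ (-vt) ≤ (p : ℝ) ^ (-1 : ℤ) := by
        simpa [zpow_neg_one] using ht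
      have := (zpow_le_zpow_iff_right₀ hp1).mp this
      omega
    -- summability
    have hsummable : Summable (fun i : ℕ => a i * t ^ i) := by
      apply Summable.of_norm_bounded (g := fun i : ℕ => (i : ℝ) * ((p : ℝ)⁻¹) ^ i)
      · have hr : ‖(p : ℝ)⁻¹‖ < 1 := by
          rw [Real.norm_eq_abs, abs_of_pos (by positivity)]
          exact inv_lt_one_of_one_lt₀ hp1
        simpa using summable_pow_mul_geometric_of_norm_lt_one 1 hr
      · intro i
        rcases eq_or_ne (a i) 0 with h | h
        · simp [h]
          positivity
        rcases Nat.eq_zero_or_pos i with rfl | hi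
        · exact absurd ha0 h
        have h1 : ‖a i * t ^ i‖ = ‖a i‖ * ‖t‖ ^ i := by
          rw [norm_mul, norm_pow]
        rw [h1]
        have hbound : ‖a i‖ ≤ (i : ℝ) := by
          rw [Padic.norm_eq_zpow_neg_valuation h]
          have hv := hval i hi h
          have : (p : ℝ) ^ (-(a i).valuation) ≤ (p : ℝ) ^ (padicValNat p i : ℤ) := by
            apply zpow_le_zpow_right₀ (le_of_lt hp1)
            omega
          refine this.trans ?_
          rw [zpow_natCast]
          exact_mod_cast Nat.le_of_dvd hi (pow_padicValNat_dvd)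
        exact mul_le_mul hbound (pow_le_pow_left₀ (norm_nonneg t) ht i)
          (by positivity) (by positivity)
    -- split off the i = 1 term
    have hsplit := Summable.tsum_eq_add_tsum_ite hsummable 1
    rw [hsum] at hsplit
    -- bound the tail
    have htail : ‖∑' (i : ℕ), if i = 1 then 0 else a i * t ^ i‖ ≤ (p : ℝ) ^ (-(c + vt + 1)) := by
      apply IsUltrametricDist.norm_tsum_le_of_forall_le_of_nonneg (by positivity)
      intro i
      rcases eq_or_ne i 1 with rfl | hi1
      · simp; positivity
      rw [if_neg hi1]
      rcases eq_or_ne (a i) 0 with h | h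
      · simp [h]; positivity
      rcases Nat.eq_zero_or_pos i with rfl | hipos
      · exact absurd ha0 h
      have hi2 : 2 ≤ i := by omega
      have hexp : (p : ℝ) ^ (-(a i).valuation) * ((p : ℝ) ^ (-vt)) ^ i
          = (p : ℝ) ^ (-(a i).valuation + (-vt) * i) := by
        rw [← zpow_natCast ((p : ℝ) ^ (-vt)), ← zpow_mul, ← zpow_add₀ (ne_of_gt hp0)]
      have hnorm : ‖a i * t ^ i‖ = (p : ℝ) ^ (-(a i).valuation + (-vt) * i) := by
        rw [norm_mul, norm_pow, Padic.norm_eq_zpow_neg_valuation h, hnt, hexp]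
      rw [hnorm]
      apply zpow_le_zpow_right₀ (le_of_lt hp1)
      have hd := hdom i hi2 h
      have hi2' : (2 : ℤ) ≤ (i : ℤ) := by exact_mod_cast hi2
      nlinarith [mul_le_mul_of_nonneg_right hi2' (by omega : (0:ℤ) ≤ vt - 1)]
    -- the linear term has larger norm
    have hlin : ‖a 1 * t ^ 1‖ = (p : ℝ) ^ (-(c + vt)) := by
      rw [norm_mul, norm_pow, Padic.norm_eq_zpow_neg_valuation ha1, hc, hnt, pow_one,
        ← zpow_add₀ (ne_of_gt hp0)]
      ring_nf
    have heq : a 1 * t ^ 1 = -∑' (i : ℕ), if i = 1 then 0 else a i * t ^ i := by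
      linear_combination -hsplit
    have : (p : ℝ) ^ (-(c + vt)) ≤ (p : ℝ) ^ (-(c + vt + 1)) := by
      rw [← hlin, heq, norm_neg]
      exact htail
    have hmono : (p : ℝ) ^ (-(c + vt + 1)) < (p : ℝ) ^ (-(c + vt)) :=
      zpow_lt_zpow_right₀ hp1 (by omega)
    linarith
  · intro ht0
    subst ht0
    have : ∀ i : ℕ, a i * (0 : ℚ_[p]) ^ i = 0 := by
      intro i
      cases i with
      | zero => simp [ha0]
      | succ n => simp
    simp [this]
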